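/- arXiv:2405.02533 — 4 statements merged into one kernel-verified Lean document; each statement's English description precedes it below -/
import Mathlib

section
/- Let Q : {0,1}^h → ℝ, let L ≤ Q(x) for all x ∈ {0,1}^h, and fix x̂ ∈ {0,1}^h. Then the integer L-shaped affine function φ(x) := Q(x̂) + (Q(x̂) − L)·(∑_{r : x̂_r = 1}(x_r − 1) − ∑_{r : x̂_r = 0} x_r) satisfies φ(x) ≤ Q(x) for all x ∈ {0,1}^h (validity) and φ(x̂) = Q(x̂) (tightness). -/
open Finset

/-- Embedding of a binary vector into ℝ^h. -/
def bv {h : ℕ} (z : Fin h → Bool) : Fin h → ℝ := fun r => if z r then 1 else 0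

/-- Standard inner product on ℝ^h. -/
def ip {h : ℕ} (p x : Fin h → ℝ) : ℝ := ∑ r, p r * x r

/-- Lagrangian function ℒ(π) = min over z ∈ {0,1}^h of (Q z − π·z). -/
noncomputable def lagr {h : ℕ} (Q : (Fin h → Bool) → ℝ) (p : Fin h → ℝ) : ℝ :=
  Finset.univ.inf' Finset.univ_nonempty (fun z => Q z - ip p (bv z))

/-- Integer L-shaped affine cut function. -/
noncomputable def intLcut {h : ℕ} (Q : (Fin h → Bool) → ℝ) (L : ℝ) (xh : Fin h → Bool)
    (x : Fin h → ℝ) : ℝ :=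
  Q xh + (Q xh - L) *
    ((∑ r ∈ Finset.univ.filter (fun r => xh r = true), (x r - 1)) -
     ∑ r ∈ Finset.univ.filter (fun r => xh r = false), x r)

/-- Integer L-shaped multipliers. -/
noncomputable def piIL {h : ℕ} (Q : (Fin h → Bool) → ℝ) (L : ℝ) (xh : Fin h → Bool) :
    Fin h → ℝ :=
  fun r => if xh r then Q xh - L else L - Q xh
theorem stmt_1 {h : ℕ} (hpos : 0 < h) (Q : (Fin h → Bool) → ℝ) (L : ℝ)
    (hL : ∀ z : Fin h → Bool, L ≤ Q z) (xh : Fin h → Bool) :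
    (∀ x : Fin h → Bool, intLcut Q L xh (bv x) ≤ Q x) ∧ intLcut Q L xh (bv xh) = Q xh := by
  have key : ∀ x : Fin h → Bool,
      (∑ r ∈ Finset.univ.filter (fun r => xh r = true), (bv x r - 1)) -
        ∑ r ∈ Finset.univ.filter (fun r => xh r = false), bv x r
      = -(((Finset.univ.filter (fun r => xh r ≠ x r)).card : ℝ)) := by
    intro x
    have hrhs : -(((Finset.univ.filter (fun r => xh r ≠ x r)).card : ℝ))
        = ∑ r ∈ Finset.univ.filter (fun r => xh r ≠ x r), (-1 : ℝ) := by simp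
    rw [hrhs, Finset.sum_filter, Finset.sum_filter, Finset.sum_filter,
      ← Finset.sum_sub_distrib]
    apply Finset.sum_congr rfl
    intro r _
    by_cases h1 : xh r <;> by_cases h2 : x r <;> simp [bv, h1, h2]
  have hQL : 0 ≤ Q xh - L := by linarith [hL xh]
  constructor
  · intro x
    unfold intLcut
    rw [key x]
    set c := (Finset.univ.filter (fun r => xh r ≠ x r)).card with hc
    rcases Nat.eq_zero_or_pos c with h0 | h1
    · have hxe : x = xh := by
        funext r
        by_contra hr
        have : r ∈ Finset.univ.filter (fun r => xh r ≠ x r) := by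
          simp [Ne]; exact fun a => hr a.symm
        have := Finset.card_pos.mpr ⟨r, this⟩
        omega
      subst hxe
      simp [h0]
    · have h1' : (1 : ℝ) ≤ (c : ℝ) := by exact_mod_cast h1
      have : (Q xh - L) * 1 ≤ (Q xh - L) * (c : ℝ) :=
        mul_le_mul_of_nonneg_left h1' hQL
      have := hL x
      nlinarith
  · unfold intLcut
    rw [key xh]
    simp
end

section
/- Let Q : {0,1}^h → ℝ, x̂ ∈ {0,1}^h, ℒ(π) := min_{z ∈ {0,1}^h}(Q(z) − π·z), and define the Lagrangian dual value D := sup_{π ∈ ℝ^h} (ℒ(π) + π·x̂). Then D = Q(x̂), i.e., the Lagrangian dual of the binary-state copy relaxation is tight at the incumbent x̂. -/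
open Finset

theorem stmt_3 {h : ℕ} (hpos : 0 < h) (Q : (Fin h → Bool) → ℝ) (xh : Fin h → Bool) :
    sSup (Set.range fun p : Fin h → ℝ => lagr Q p + ip p (bv xh)) = Q xh := by
  have hub : ∀ y ∈ (Set.range fun p : Fin h → ℝ => lagr Q p + ip p (bv xh)), y ≤ Q xh := by
    rintro y ⟨p, rfl⟩
    have h1 : lagr Q p ≤ Q xh - ip p (bv xh) :=
      Finset.inf'_le _ (Finset.mem_univ xh)
    simp only
    linarith
  set M := Finset.univ.sup' Finset.univ_nonempty (fun z : Fin h → Bool => Q xh - Q z) with hMdef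
  have hM0 : 0 ≤ M := by
    have h := Finset.le_sup' (fun z : Fin h → Bool => Q xh - Q z) (Finset.mem_univ xh)
    linarith
  set p : Fin h → ℝ := fun r => if xh r then M else -M with hp
  have hterm : ∀ z : Fin h → Bool, ∀ r,
      p r * bv xh r - p r * bv z r = if xh r = z r then 0 else M := by
    intro z r
    rcases hx : xh r <;> rcases hzr : z r <;> simp [hp, bv, hx, hzr]
  have key : ∀ z : Fin h → Bool, Q xh ≤ Q z - ip p (bv z) + ip p (bv xh) := by
    intro z
    by_cases hz : z = xh
    · subst hz; linarith
    · obtain ⟨r0, hr0⟩ := Function.ne_iff.mp hz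
      have hdiff : ip p (bv xh) - ip p (bv z)
          = ∑ r, (p r * bv xh r - p r * bv z r) := by
        simp [ip, Finset.sum_sub_distrib]
      have h0 : ∀ r ∈ Finset.univ, (0:ℝ) ≤ p r * bv xh r - p r * bv z r := by
        intro r _
        rw [hterm z r]
        split <;> simp [hM0]
      have hsingle : p r0 * bv xh r0 - p r0 * bv z r0
          ≤ ∑ r, (p r * bv xh r - p r * bv z r) :=
        Finset.single_le_sum h0 (Finset.mem_univ r0)
      have hr0' : p r0 * bv xh r0 - p r0 * bv z r0 = M := by
        rw [hterm z r0]
        simp [Ne.symm hr0]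
      have hMz : Q xh - Q z ≤ M :=
        Finset.le_sup' (fun z : Fin h → Bool => Q xh - Q z) (Finset.mem_univ z)
      linarith
  have hval : lagr Q p + ip p (bv xh) = Q xh := by
    apply le_antisymm
    · have h1 : lagr Q p ≤ Q xh - ip p (bv xh) :=
        Finset.inf'_le _ (Finset.mem_univ xh)
      linarith
    · have h2 : Q xh - ip p (bv xh) ≤ lagr Q p :=
        Finset.le_inf' _ _ (fun z _ => by linarith [key z])
      linarith
  refine le_antisymm (csSup_le ⟨_, ⟨0, rfl⟩⟩ hub) ?_
  exact le_csSup ⟨Q xh, hub⟩ ⟨p, hval⟩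
end

section
/- Let Q : {0,1}^h → ℝ, let L ≤ Q(x) for all x ∈ {0,1}^h, fix x̂ ∈ {0,1}^h, and define π ∈ ℝ^h by π_r = Q(x̂) − L if x̂_r = 1 and π_r = L − Q(x̂) if x̂_r = 0. Then π is an optimal solution of the Lagrangian dual problem max_{π' ∈ ℝ^h} (min_{z ∈ {0,1}^h}(Q(z) − π'·z) + π'·x̂), and the optimal value equals Q(x̂). -/
open Finset

theorem stmt_5 {h : ℕ} (hpos : 0 < h) (Q : (Fin h → Bool) → ℝ) (L : ℝ)
    (hL : ∀ z : Fin h → Bool, L ≤ Q z) (xh : Fin h → Bool) :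
    (∀ p' : Fin h → ℝ, lagr Q p' + ip p' (bv xh) ≤ lagr Q (piIL Q L xh) + ip (piIL Q L xh) (bv xh)) ∧
      lagr Q (piIL Q L xh) + ip (piIL Q L xh) (bv xh) = Q xh := by
  set p := piIL Q L xh with hp
  have hD0 : 0 ≤ Q xh - L := sub_nonneg.2 (hL xh)
  have key : ∀ z : Fin h → Bool, Q xh - ip p (bv xh) ≤ Q z - ip p (bv z) := by
    intro z
    by_cases hz : z = xh
    · subst hz; exact le_refl _
    · have hr0 : ∃ r, z r ≠ xh r := by
        by_contra hc; push_neg at hc; exact hz (funext hc)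
      obtain ⟨r0, hr0⟩ := hr0
      have hsum : Q xh - L ≤ ip p (bv xh) - ip p (bv z) := by
        have heq : ip p (bv xh) - ip p (bv z)
            = ∑ r, (p r * bv xh r - p r * bv z r) := by
          simp [ip, Finset.sum_sub_distrib]
        rw [heq]
        have h1 : ∀ r ∈ Finset.univ, (0:ℝ) ≤ p r * bv xh r - p r * bv z r := by
          intro r _
          cases hx : xh r <;> cases hzz : z r <;>
            simp [hp, piIL, bv, hx, hzz] <;> linarith
        have h2 : Q xh - L ≤ p r0 * bv xh r0 - p r0 * bv z r0 := by
          cases hx : xh r0 <;> cases hzz : z r0 <;>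
            simp [hx, hzz] at hr0 ⊢ <;>
            simp [hp, piIL, bv, hx, hzz] <;> linarith
        exact le_trans h2 (Finset.single_le_sum h1 (Finset.mem_univ r0))
      have := hL z
      linarith
  have hle : lagr Q p ≤ Q xh - ip p (bv xh) :=
    Finset.inf'_le _ (Finset.mem_univ xh)
  have hge : Q xh - ip p (bv xh) ≤ lagr Q p :=
    Finset.le_inf' _ _ (fun z _ => key z)
  have hval : lagr Q p + ip p (bv xh) = Q xh := by linarith
  refine ⟨fun p' => ?_, hval⟩
  have : lagr Q p' ≤ Q xh - ip p' (bv xh) :=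
    Finset.inf'_le _ (Finset.mem_univ xh)
  linarith
end

section
/- Let Q : {0,1}^h → ℝ with lower bound L ≤ min_z Q(z), and let π be the integer L-shaped multipliers at incumbent x̂ (π_r = Q(x̂) − L if x̂_r = 1, else L − Q(x̂)). Then the Lagrangian cut x ↦ ℒ(π) + π·x, with ℒ(π) = min_{z∈{0,1}^h}(Q(z) − π·z), coincides with the integer L-shaped cut x ↦ Q(x̂) + (Q(x̂) − L)(∑_{r: x̂_r=1}(x_r − 1) − ∑_{r: x̂_r=0} x_r) as functions on ℝ^h. -/
open Finset

lemma ip_piIL {h : ℕ} (Q : (Fin h → Bool) → ℝ) (L : ℝ) (xh : Fin h → Bool)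
    (x : Fin h → ℝ) :
    ip (piIL Q L xh) x = (Q xh - L) *
      ((∑ r ∈ Finset.univ.filter (fun r => xh r = true), x r) -
       ∑ r ∈ Finset.univ.filter (fun r => xh r = false), x r) := by
  unfold ip piIL
  rw [← Finset.sum_filter_add_sum_filter_not Finset.univ (fun r => xh r = true)]
  have h1 : ∀ r ∈ Finset.univ.filter (fun r => xh r = true),
      (if xh r then Q xh - L else L - Q xh) * x r = (Q xh - L) * x r := by
    intro r hr
    simp only [Finset.mem_filter] at hr
    simp [hr.2]
  have h2 : ∀ r ∈ Finset.univ.filter (fun r => ¬ xh r = true),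
      (if xh r then Q xh - L else L - Q xh) * x r = -((Q xh - L) * x r) := by
    intro r hr
    simp only [Finset.mem_filter, Bool.not_eq_true] at hr
    simp [hr.2]; ring
  rw [Finset.sum_congr rfl h1, Finset.sum_congr rfl h2]
  have : (Finset.univ.filter (fun r => ¬ xh r = true)) =
      (Finset.univ.filter (fun r : Fin h => xh r = false)) := by
    apply Finset.filter_congr; intro r _; simp
  rw [this, Finset.sum_neg_distrib, ← Finset.mul_sum, ← Finset.mul_sum]
  ring

lemma bv_nonneg {h : ℕ} (z : Fin h → Bool) (r : Fin h) : 0 ≤ bv z r := by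
  unfold bv; split <;> norm_num

lemma bv_le_one {h : ℕ} (z : Fin h → Bool) (r : Fin h) : bv z r ≤ 1 := by
  unfold bv; split <;> norm_num

theorem stmt_17 {h : ℕ} (hpos : 0 < h) (Q : (Fin h → Bool) → ℝ) (L : ℝ)
    (hL : ∀ z : Fin h → Bool, L ≤ Q z) (xh : Fin h → Bool) :
    ∀ x : Fin h → ℝ, lagr Q (piIL Q L xh) + ip (piIL Q L xh) x = intLcut Q L xh x := by
  intro x
  set d : ℝ := Q xh - L with hd
  have hd0 : 0 ≤ d := by simp [hd]; linarith [hL xh]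
  set F1 := Finset.univ.filter (fun r => xh r = true) with hF1
  set F0 := Finset.univ.filter (fun r => xh r = false) with hF0
  have hbvxh1 : ∑ r ∈ F1, bv xh r = (F1.card : ℝ) := by
    rw [Finset.sum_congr rfl (fun r hr => ?_), Finset.sum_const, nsmul_eq_mul, mul_one]
    simp only [hF1, Finset.mem_filter] at hr
    simp [bv, hr.2]
  have hbvxh0 : ∑ r ∈ F0, bv xh r = 0 := by
    apply Finset.sum_eq_zero; intro r hr
    simp only [hF0, Finset.mem_filter] at hr
    simp [bv, hr.2]
  have hipxh : ip (piIL Q L xh) (bv xh) = d * F1.card := by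
    rw [ip_piIL]; rw [← hF1, ← hF0, hbvxh1, hbvxh0, ← hd]; ring
  -- lagr equals value at xh
  have hlagr : lagr Q (piIL Q L xh) = Q xh - ip (piIL Q L xh) (bv xh) := by
    apply le_antisymm
    · exact Finset.inf'_le _ (Finset.mem_univ xh)
    · apply Finset.le_inf'
      intro z _
      rw [hipxh, ip_piIL, ← hF1, ← hF0, ← hd]
      by_cases hz : z = xh
      · subst hz; rw [hbvxh1, hbvxh0]; ring_nf; exact le_refl _
      · -- find a coordinate where they differ
        obtain ⟨r0, hr0⟩ := Function.ne_iff.mp hz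
        have hS1le : ∑ r ∈ F1, bv z r ≤ (F1.card : ℝ) := by
          calc ∑ r ∈ F1, bv z r ≤ ∑ r ∈ F1, (1 : ℝ) :=
                Finset.sum_le_sum (fun r _ => bv_le_one z r)
            _ = (F1.card : ℝ) := by simp
        have hS0ge : 0 ≤ ∑ r ∈ F0, bv z r :=
          Finset.sum_nonneg (fun r _ => bv_nonneg z r)
        have key : (∑ r ∈ F1, bv z r) - ∑ r ∈ F0, bv z r ≤ (F1.card : ℝ) - 1 := by
          cases hxr0 : xh r0 with
          | true =>
            have hz0 : z r0 = false := by
              cases hzz : z r0 with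
              | true => exact absurd (hzz.trans hxr0.symm) hr0
              | false => rfl
            have hmem : r0 ∈ F1 := by simp [hF1, hxr0]
            have : ∑ r ∈ F1, bv z r ≤ (F1.card : ℝ) - 1 := by
              rw [← Finset.add_sum_erase _ _ hmem]
              have : bv z r0 = 0 := by simp [bv, hz0]
              rw [this, zero_add]
              calc ∑ r ∈ F1.erase r0, bv z r ≤ ∑ r ∈ F1.erase r0, (1 : ℝ) :=
                    Finset.sum_le_sum (fun r _ => bv_le_one z r)
                _ = ((F1.erase r0).card : ℝ) := by simp
                _ = (F1.card : ℝ) - 1 := by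
                    rw [Finset.card_erase_of_mem hmem]
                    have : 1 ≤ F1.card := Finset.card_pos.mpr ⟨r0, hmem⟩
                    push_cast [this]; ring
            linarith
          | false =>
            have hz0 : z r0 = true := by
              cases hzz : z r0 with
              | true => rfl
              | false => exact absurd (hzz.trans hxr0.symm) hr0
            have hmem : r0 ∈ F0 := by simp [hF0, hxr0]
            have : (1 : ℝ) ≤ ∑ r ∈ F0, bv z r := by
              rw [← Finset.add_sum_erase _ _ hmem]
              have h1 : bv z r0 = 1 := by simp [bv, hz0]
              have h2 : 0 ≤ ∑ r ∈ F0.erase r0, bv z r :=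
                Finset.sum_nonneg (fun r _ => bv_nonneg z r)
              linarith
            linarith
        have hQz : L ≤ Q z := hL z
        nlinarith [key, hQz, hd0]
  rw [hlagr, hipxh, ip_piIL, ← hF1, ← hF0, ← hd]
  unfold intLcut
  rw [← hF1, ← hF0, ← hd]
  rw [Finset.sum_sub_distrib, Finset.sum_const, nsmul_eq_mul, mul_one]
  ring
end
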